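/- arXiv:math/9908066 — 2 statements merged into one kernel-verified Lean document; each statement's English description precedes it below -/
import Mathlib

section
/- Given a countable family {β_M}_{M ∈ ℕ} of class-KL functions, there exist a class-K∞ function γ̂ and a class-KL function β̂ such that β_M(r, t) ≤ γ̂(M)·β̂(r, t) for all r, t ≥ 0 and all M ∈ ℕ with M ≥ 1. -/
/-- A function of class `K`: continuous, strictly increasing on `[0,∞)`, zero at zero. -/
def ClassK (f : ℝ → ℝ) : Prop :=
  ContinuousOn f (Set.Ici 0) ∧ StrictMonoOn f (Set.Ici 0) ∧ f 0 = 0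

/-- A function of class `K∞`: class `K` and unbounded. -/
def ClassKInf (f : ℝ → ℝ) : Prop :=
  ClassK f ∧ Filter.Tendsto f Filter.atTop Filter.atTop

/-- A function of class `KL`. -/
def ClassKL (β : ℝ → ℝ → ℝ) : Prop :=
  (∀ t, 0 ≤ t → ClassK (fun r => β r t)) ∧
  (∀ r, 0 ≤ r → AntitoneOn (fun t => β r t) (Set.Ici 0) ∧
    Filter.Tendsto (fun t => β r t) Filter.atTop (nhds 0))

/-!
For `n ≥ r`, `β_M(r, t) ≤ √β_M(r, 0) · (1 + √β_M(n, 0)) · min 1 √β_M(n, t)`: the first factor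
carries the decay as `r → 0`, the last one the decay as `t → ∞`. The last factors, over all pairs
`(M, n)`, are dominated up to the constants `2 ^ encode (M, n)` by one positive decreasing
`b(t) → 0`. With `n = ⌈r⌉₊` the remaining factors are, as functions of `r`, dominated by class-`K`
functions, and countably many class-`K` functions are dominated by a single one, `a`, up to
constants `C_M`. So `β̂(r, t) = a(r) b(t)` works, with `γ̂` any class-`K∞` function above `C_M`.
-/

open Filter Topology Set

namespace ClassK

variable {f : ℝ → ℝ}

lemma nonneg (hf : ClassK f) {r : ℝ} (hr : 0 ≤ r) : 0 ≤ f r := by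
  simpa [hf.2.2] using hf.2.1.monotoneOn self_mem_Ici hr hr

lemma mono (hf : ClassK f) {r r' : ℝ} (hr : 0 ≤ r) (h : r ≤ r') : f r ≤ f r' :=
  hf.2.1.monotoneOn hr (hr.trans h) h

lemma sqrt (hf : ClassK f) : ClassK fun r => √(f r) :=
  ⟨hf.1.sqrt, fun _ hx _ hy hxy => Real.sqrt_lt_sqrt (hf.nonneg hx) (hf.2.1 hx hy hxy),
    by simp [hf.2.2]⟩

lemma mul_of_pos (hf : ClassK f) {h : ℝ → ℝ} (hc : Continuous h) (hm : Monotone h)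
    (hp : ∀ s, 0 < h s) : ClassK fun s => f s * h s :=
  ⟨hf.1.mul hc.continuousOn, fun x hx y hy hxy =>
    (mul_lt_mul_of_pos_right (hf.2.1 hx hy hxy) (hp x)).trans_le
      (mul_le_mul_of_nonneg_left (hm hxy.le) (hf.nonneg hy)), by simp [hf.2.2]⟩

lemma add_monotone (hf : ClassK f) {g : ℝ → ℝ} (hgc : Continuous g) (hgm : Monotone g)
    (hg0 : g 0 = 0) : ClassK fun s => f s + g s :=
  ⟨hf.1.add hgc.continuousOn, fun _ hx _ hy hxy =>
    add_lt_add_of_lt_of_le (hf.2.1 hx hy hxy) (hgm hxy.le), by simp [hf.2.2, hg0]⟩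

lemma classKL_mul {a b : ℝ → ℝ} (ha : ClassK a) (hb_pos : ∀ t, 0 < b t)
    (hb_anti : AntitoneOn b (Ici 0)) (hb_lim : Tendsto b atTop (𝓝 0)) :
    ClassKL fun r t => a r * b t :=
  ⟨fun t _ => ha.mul_of_pos continuous_const monotone_const fun _ => hb_pos t,
    fun _ hr => ⟨fun _ hx _ hy hxy =>
      mul_le_mul_of_nonneg_left (hb_anti hx hy hxy) (ha.nonneg hr),
      by simpa using hb_lim.const_mul _⟩⟩

end ClassK

lemma classKInf_id_mul {h : ℝ → ℝ} (hc : Continuous h) (hm : Monotone h)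
    (hp : ∀ s, 0 < h s) : ClassKInf fun s => s * h s := by
  refine ⟨ClassK.mul_of_pos ⟨continuousOn_id, strictMonoOn_id, rfl⟩ hc hm hp, ?_⟩
  refine tendsto_atTop_mono' atTop ?_ (tendsto_id.atTop_mul_const (hp 0))
  filter_upwards [eventually_ge_atTop 0] with s hs
  exact mul_le_mul_of_nonneg_left (hm hs) hs

namespace ClassKL

variable {β : ℝ → ℝ → ℝ}

lemma nonneg (hβ : ClassKL β) {r t : ℝ} (hr : 0 ≤ r) (ht : 0 ≤ t) : 0 ≤ β r t :=
  (hβ.1 t ht).nonneg hr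

lemma le_sqrt_mul_min (hβ : ClassKL β) {r n t : ℝ} (hr : 0 ≤ r) (hrn : r ≤ n) (ht : 0 ≤ t) :
    β r t ≤ √(β r 0) * ((1 + √(β n 0)) * min 1 √(β n t)) := by
  have h_le_r0 : β r t ≤ β r 0 := (hβ.2 r hr).1 self_mem_Ici ht ht
  have h_le_nt : β r t ≤ β n t := (hβ.1 t ht).mono hr hrn
  have h_r0_n0 : √(β r 0) ≤ √(β n 0) := Real.sqrt_le_sqrt ((hβ.1 0 le_rfl).mono hr hrn)
  have h_one_le : 1 ≤ 1 + √(β n 0) := le_add_of_nonneg_right (Real.sqrt_nonneg _)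
  rcases le_total √(β n t) 1 with hsmall | hlarge
  · rw [min_eq_right hsmall]
    calc β r t = √(β r t) * √(β r t) := (Real.mul_self_sqrt (hβ.nonneg hr ht)).symm
      _ ≤ √(β r 0) * √(β n t) := by gcongr
      _ ≤ √(β r 0) * ((1 + √(β n 0)) * √(β n t)) := by
        gcongr
        exact le_mul_of_one_le_left (Real.sqrt_nonneg _) h_one_le
  · rw [min_eq_left hlarge, mul_one]
    calc β r t ≤ β r 0 := h_le_r0
      _ = √(β r 0) * √(β r 0) := (Real.mul_self_sqrt (hβ.nonneg hr le_rfl)).symm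
      _ ≤ √(β r 0) * (1 + √(β n 0)) := by gcongr; linarith

lemma le_sqrt_mul_mul (hβ : ClassKL β) {b h : ℝ → ℝ} {e : ℕ → ℕ} (hb_pos : ∀ t, 0 < b t)
    (hb : ∀ (n : ℕ) t, min 1 √(β n t) ≤ 2 ^ e n * b t)
    (hh : ∀ (n : ℕ) s, (n : ℝ) ≤ s + 1 → (1 + √(β n 0)) * 2 ^ e n ≤ h s)
    {r t : ℝ} (hr : 0 ≤ r) (ht : 0 ≤ t) : β r t ≤ √(β r 0) * h r * b t := by
  have hbt : 0 ≤ b t := (hb_pos t).le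
  calc β r t ≤ √(β r 0) * ((1 + √(β ⌈r⌉₊ 0)) * min 1 √(β ⌈r⌉₊ t)) :=
        hβ.le_sqrt_mul_min hr (Nat.le_ceil r) ht
    _ ≤ √(β r 0) * ((1 + √(β ⌈r⌉₊ 0)) * 2 ^ e ⌈r⌉₊) * b t := by
        rw [mul_assoc, mul_assoc (1 + _)]
        gcongr
        exact hb _ t
    _ ≤ √(β r 0) * h r * b t := by
        gcongr
        exact hh _ r (Nat.ceil_lt_add_one hr).le

end ClassKL

/-- Only finitely many of the ramps are nonzero on a half-line `Iio x`, so the series is locally a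
finite sum of continuous functions. -/
lemma exists_continuous_monotone_majorant (c : ℕ → ℝ) :
    ∃ h : ℝ → ℝ, Continuous h ∧ Monotone h ∧ (∀ s, 0 < h s) ∧
      ∀ (n : ℕ) (s : ℝ), (n : ℝ) ≤ s + 1 → c n ≤ h s := by
  set ramp : ℕ → ℝ → ℝ := fun m s => max (c m) 0 * min 1 (max 0 (s + 2 - m))
  have hramp_nonneg (m : ℕ) (s : ℝ) : 0 ≤ ramp m s :=
    mul_nonneg (le_max_right _ _) (le_min zero_le_one (le_max_left _ _))
  have hramp_zero {m : ℕ} {s : ℝ} (hm : s + 2 ≤ m) : ramp m s = 0 := by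
    simp [ramp, max_eq_left (sub_nonpos.2 hm)]
  have htsum_eq {N : ℕ} {s : ℝ} (hN : s + 2 ≤ N) :
      ∑' m, ramp m s = ∑ m ∈ Finset.range N, ramp m s :=
    tsum_eq_sum fun m hm => hramp_zero <| hN.trans <| by
      exact_mod_cast not_lt.1 (Finset.mem_range.not.1 hm)
  have hceil (s : ℝ) : s + 2 ≤ (⌈s⌉₊ + 2 : ℕ) := by push_cast; linarith [Nat.le_ceil s]
  have hsummable (s : ℝ) : Summable (ramp · s) :=
    summable_of_ne_finset_zero (s := Finset.range (⌈s⌉₊ + 2)) fun m hm => hramp_zero <|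
      (hceil s).trans <| by exact_mod_cast not_lt.1 (Finset.mem_range.not.1 hm)
  refine ⟨fun s => 1 + ∑' m, ramp m s, ?_, ?_, ?_, ?_⟩
  · refine continuous_iff_continuousAt.2 fun x => ?_
    have hlocal : (fun s => 1 + ∑ m ∈ Finset.range (⌈x⌉₊ + 3), ramp m s) =ᶠ[𝓝 x]
        fun s => 1 + ∑' m, ramp m s := by
      filter_upwards [Iio_mem_nhds (lt_add_one x)] with s hs
      rw [htsum_eq]
      push_cast
      linarith [Nat.le_ceil x, hs.out]
    exact (by fun_prop : Continuous _).continuousAt.congr hlocal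
  · refine fun s s' hss' => add_le_add_right ?_ 1
    refine (hsummable s).tsum_le_tsum (fun m => ?_) (hsummable s')
    exact mul_le_mul_of_nonneg_left (by gcongr) (le_max_right _ _)
  · exact fun s => add_pos_of_pos_of_nonneg one_pos (tsum_nonneg (hramp_nonneg · s))
  · intro n s hn
    have hfull : ramp n s = max (c n) 0 := by
      simp only [ramp]
      rw [min_eq_left (le_max_of_le_right (by linarith)), mul_one]
    calc c n ≤ ramp n s := hfull ▸ le_max_left _ _
      _ ≤ ∑' m, ramp m s := (hsummable s).le_tsum n fun m _ => hramp_nonneg m s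
      _ ≤ 1 + ∑' m, ramp m s := le_add_of_nonneg_left zero_le_one

namespace ClassK

variable {f : ℕ → ℝ → ℝ}

/-- Clamping `r` to `[0, M + 1]` and normalizing keeps the `M`-th term in `[0, 2⁻ᴹ]`, so the series
converges uniformly. -/
lemma exists_family_le_mul_on_Icc (hf : ∀ M, ClassK (f M)) :
    ∃ a : ℝ → ℝ, Continuous a ∧ Monotone a ∧ a 0 = 0 ∧
      ∀ M : ℕ, ∃ C, 1 ≤ C ∧ ∀ r : ℝ, 0 ≤ r → r ≤ M + 1 → f M r ≤ C * a r := by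
  set clamp : ℕ → ℝ → ℝ := fun M r => min (max r 0) (M + 1)
  have hclamp_nonneg (M : ℕ) (r : ℝ) : 0 ≤ clamp M r :=
    le_min (le_max_right _ _) (by positivity)
  have hclamp_le (M : ℕ) (r : ℝ) : clamp M r ≤ M + 1 := min_le_right _ _
  set term : ℕ → ℝ → ℝ := fun M r => (1 / 2) ^ M * (f M (clamp M r) / (1 + f M (M + 1)))
  have hden (M : ℕ) : 0 < 1 + f M (M + 1) := by
    linarith [(hf M).nonneg (by positivity : (0 : ℝ) ≤ M + 1)]
  have hterm_nonneg (M : ℕ) (r : ℝ) : 0 ≤ term M r :=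
    mul_nonneg (by positivity) (div_nonneg ((hf M).nonneg (hclamp_nonneg M r)) (hden M).le)
  have hterm_le (M : ℕ) (r : ℝ) : term M r ≤ (1 / 2) ^ M := by
    refine mul_le_of_le_one_right (by positivity) ((div_le_one (hden M)).2 ?_)
    linarith [(hf M).mono (hclamp_nonneg M r) (hclamp_le M r)]
  have hterm_mono (M : ℕ) : Monotone (term M) := fun r r' hrr' =>
    mul_le_mul_of_nonneg_left (div_le_div_of_nonneg_right ((hf M).mono (hclamp_nonneg M r)
      (min_le_min (max_le_max hrr' le_rfl) le_rfl)) (hden M).le) (by positivity)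
  have hsummable (r : ℝ) : Summable (term · r) :=
    summable_geometric_two.of_nonneg_of_le (hterm_nonneg · r) (hterm_le · r)
  refine ⟨fun r => ∑' M, term M r, ?_, ?_, ?_, fun M => ⟨2 ^ M * (1 + f M (M + 1)), ?_, ?_⟩⟩
  · refine continuous_tsum (fun M => ?_) summable_geometric_two fun M r => ?_
    · have hcont : Continuous (f M ∘ clamp M) :=
        (hf M).1.comp_continuous (by fun_prop) (hclamp_nonneg M)
      exact continuous_const.mul (hcont.div_const _)
    · rw [Real.norm_eq_abs, abs_of_nonneg (hterm_nonneg M r)]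
      exact hterm_le M r
  · exact fun r r' hrr' => (hsummable r).tsum_le_tsum (hterm_mono · hrr') (hsummable r')
  · have hclamp_zero (M : ℕ) : clamp M 0 = 0 := by simp [clamp]; positivity
    simp [term, hclamp_zero, (hf _).2.2]
  · exact one_le_mul_of_one_le_of_one_le (one_le_pow₀ one_le_two)
      (le_add_of_nonneg_right ((hf M).nonneg (by positivity)))
  · intro r hr hrM
    have hclamp : clamp M r = r := by simp [clamp, hr, hrM]
    have hterm : f M r = 2 ^ M * (1 + f M (M + 1)) * term M r := by
      simp only [term, hclamp, one_div, inv_pow]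
      field_simp
      exact (mul_div_cancel_right₀ _ (hden M).ne').symm
    rw [hterm]
    exact mul_le_mul_of_nonneg_left ((hsummable r).le_tsum M fun M' _ => hterm_nonneg M' r)
      (mul_nonneg (by positivity) (hden M).le)

lemma exists_family_le_mul (hf : ∀ M, ClassK (f M)) :
    ∃ a, ClassK a ∧ ∃ C : ℕ → ℝ, ∀ M r, 0 ≤ r → f M r ≤ C M * a r := by
  obtain ⟨a₀, ha₀_cont, ha₀_mono, ha₀_zero, ha₀⟩ := exists_family_le_mul_on_Icc hf
  choose C hC_one hC using ha₀
  obtain ⟨h, hh_cont, hh_mono, hh_pos, hh⟩ :=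
    exists_continuous_monotone_majorant fun n => ∑ M ∈ Finset.range (n + 1), f M n
  have ha : ClassK fun s => s * h s + a₀ s :=
    (classKInf_id_mul hh_cont hh_mono hh_pos).1.add_monotone ha₀_cont ha₀_mono ha₀_zero
  refine ⟨_, ha, C, fun M r hr => ?_⟩
  rcases le_or_gt r (M + 1) with hrM | hrM
  · calc f M r ≤ C M * a₀ r := hC M r hr hrM
      _ ≤ C M * (r * h r + a₀ r) := mul_le_mul_of_nonneg_left
        (le_add_of_nonneg_left (mul_nonneg hr (hh_pos r).le)) (zero_le_one.trans (hC_one M))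
  · have hM : (0 : ℝ) ≤ M := M.cast_nonneg
    have hMr : M ≤ ⌈r⌉₊ := Nat.cast_le (α := ℝ) |>.1 (by linarith [Nat.le_ceil r])
    calc f M r ≤ f M ⌈r⌉₊ := (hf M).mono hr (Nat.le_ceil r)
      _ ≤ ∑ M' ∈ Finset.range (⌈r⌉₊ + 1), f M' ⌈r⌉₊ :=
        Finset.single_le_sum (fun M' _ => (hf M').nonneg (Nat.cast_nonneg _))
          (Finset.mem_range.2 (Nat.lt_succ_of_le hMr))
      _ ≤ h r := hh _ r (Nat.ceil_lt_add_one hr).le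
      _ ≤ r * h r := le_mul_of_one_le_left (hh_pos r).le (by linarith)
      _ ≤ r * h r + a₀ r := le_add_of_nonneg_right (by simpa [ha₀_zero] using ha₀_mono hr)
      _ ≤ C M * (r * h r + a₀ r) := le_mul_of_one_le_left (ha.nonneg hr) (hC_one M)

end ClassK

lemma exists_antitone_majorant {ι : Type*} [Encodable ι] {φ : ι → ℝ → ℝ}
    (hφ_nonneg : ∀ i t, 0 ≤ φ i t) (hφ_anti : ∀ i, AntitoneOn (φ i) (Ici 0))
    (hφ_lim : ∀ i, Tendsto (φ i) atTop (𝓝 0)) :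
    ∃ b : ℝ → ℝ, (∀ t, 0 < b t) ∧ AntitoneOn b (Ici 0) ∧ Tendsto b atTop (𝓝 0) ∧
      ∀ i t, min 1 (φ i t) ≤ 2 ^ Encodable.encode i * b t := by
  set term : ι → ℝ → ℝ := fun i t => (1 / 2) ^ Encodable.encode i * min 1 (φ i t)
  have hterm_nonneg (i : ι) (t : ℝ) : 0 ≤ term i t :=
    mul_nonneg (by positivity) (le_min zero_le_one (hφ_nonneg i t))
  have hterm_le (i : ι) (t : ℝ) : ‖term i t‖ ≤ (1 / 2) ^ Encodable.encode i := by
    rw [Real.norm_eq_abs, abs_of_nonneg (hterm_nonneg i t)]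
    exact mul_le_of_le_one_right (by positivity) (min_le_left _ _)
  have hsummable (t : ℝ) : Summable (term · t) :=
    summable_geometric_two_encode.of_norm_bounded (hterm_le · t)
  refine ⟨fun t => Real.exp (-t) + ∑' i, term i t, fun t => ?_, fun t ht t' ht' htt' => ?_, ?_,
    fun i t => ?_⟩
  · exact add_pos_of_pos_of_nonneg (Real.exp_pos _) (tsum_nonneg (hterm_nonneg · t))
  · refine add_le_add (Real.exp_le_exp.2 (neg_le_neg htt')) ?_
    refine (hsummable t').tsum_le_tsum (fun i => ?_) (hsummable t)
    exact mul_le_mul_of_nonneg_left (min_le_min le_rfl (hφ_anti i ht ht' htt')) (by positivity)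
  · have hterm_lim (i : ι) : Tendsto (term i) atTop (𝓝 0) := by
      simpa [term] using ((tendsto_const_nhds (x := (1 : ℝ))).min (hφ_lim i)).const_mul
        ((1 / 2 : ℝ) ^ Encodable.encode i)
    simpa [term] using Real.tendsto_exp_neg_atTop_nhds_zero.add
      (tendsto_tsum_of_dominated_convergence summable_geometric_two_encode hterm_lim
        (Eventually.of_forall fun t i => hterm_le i t))
  · calc min 1 (φ i t) = 2 ^ Encodable.encode i * term i t := by
          simp only [term, one_div, inv_pow]
          field_simp
      _ ≤ 2 ^ Encodable.encode i * (Real.exp (-t) + ∑' i, term i t) := by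
          refine mul_le_mul_of_nonneg_left ?_ (by positivity)
          exact ((hsummable t).le_tsum i fun j _ => hterm_nonneg j t).trans
            (le_add_of_nonneg_left (Real.exp_pos _).le)

/-- Given a countable family of class-KL functions, there exist a class-K∞ function γ̂ and a
class-KL function β̂ with β_M(r,t) ≤ γ̂(M)·β̂(r,t) for all r, t ≥ 0 and integers M ≥ 1. -/
theorem stmt4 (β : ℕ → ℝ → ℝ → ℝ) (hβ : ∀ M : ℕ, ClassKL (β M)) :
    ∃ γhat : ℝ → ℝ, ∃ βhat : ℝ → ℝ → ℝ, ClassKInf γhat ∧ ClassKL βhat ∧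
      ∀ M : ℕ, 1 ≤ M → ∀ r t : ℝ, 0 ≤ r → 0 ≤ t →
        β M r t ≤ γhat (M : ℝ) * βhat r t := by
  obtain ⟨b, hb_pos, hb_anti, hb_lim, hb⟩ :=
    exists_antitone_majorant (φ := fun (p : ℕ × ℕ) t => √(β p.1 p.2 t))
      (fun _ _ => Real.sqrt_nonneg _)
      (fun p _ hx _ hy hxy => Real.sqrt_le_sqrt (((hβ p.1).2 p.2 p.2.cast_nonneg).1 hx hy hxy))
      (fun p => by simpa using ((hβ p.1).2 p.2 p.2.cast_nonneg).2.sqrt)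
  choose h hh_cont hh_mono hh_pos hh using fun M => exists_continuous_monotone_majorant
    fun n => (1 + √(β M n 0)) * 2 ^ Encodable.encode (M, n)
  obtain ⟨a, ha, C, hC⟩ := ClassK.exists_family_le_mul (f := fun M r => √(β M r 0) * h M r)
    fun M => ((hβ M).1 0 le_rfl).sqrt.mul_of_pos (hh_cont M) (hh_mono M) (hh_pos M)
  obtain ⟨g, hg_cont, hg_mono, hg_pos, hg⟩ := exists_continuous_monotone_majorant C
  refine ⟨fun s => s * g s, fun r t => a r * b t, classKInf_id_mul hg_cont hg_mono hg_pos,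
    ha.classKL_mul hb_pos hb_anti hb_lim, fun M hM r t hr ht => ?_⟩
  have hbt : 0 ≤ b t := (hb_pos t).le
  calc β M r t ≤ √(β M r 0) * h M r * b t :=
        (hβ M).le_sqrt_mul_mul hb_pos (fun n => hb (M, n)) (hh M) hr ht
    _ ≤ C M * a r * b t := mul_le_mul_of_nonneg_right (hC M r hr) hbt
    _ ≤ M * g M * (a r * b t) := by
        rw [mul_assoc]
        refine mul_le_mul_of_nonneg_right ?_ (mul_nonneg (ha.nonneg hr) hbt)
        have hM' : (1 : ℝ) ≤ M := Nat.one_le_cast.2 hM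
        exact (hg M M (by linarith)).trans (le_mul_of_one_le_left (hg_pos M).le hM')
end

section
/- Given two countable families {γ_M}_{M∈ℕ} and {σ_M}_{M∈ℕ} of class-K∞ functions, there exist three class-K∞ functions γ̂₂, δ̂₁, δ₂ such that for all T > 0, all M ∈ ℕ with M ≥ 1, and all nonnegative measurable functions φ on [0, T]: γ_M(∫₀^T σ_M(φ(s)) ds) ≤ γ̂₂(M) · δ̂₁(∫₀^T δ₂(φ(s)) ds). -/
/-!
Every countable family `f_M` of continuous nondecreasing functions on `[0, ∞)` vanishing at `0`
admits a single class-`K∞` majorant `Φ` with `f_M ≤ c_M Φ` on `[0, ∞)` and `f_M ≤ Φ` on `[M, ∞)`: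
take `Φ r = r + ∑ ramp_M(r) f_M(r) + ∑ 2⁻ᴹ min (f_M r) 1`. The first sum is locally finite, since
`ramp_M` switches `f_M` on only beyond `M - 1`, and dominates `f_M` on `[M, ∞)`; the second controls
every `f_M` on `[0, M]`, where `f_M ≤ f_M(M)`. Apply this to `σ_M` to get `δ₂`, so that
`∫ σ_M(φ) ≤ c_M ∫ δ₂(φ)`; then to `r ↦ γ_M(c_M r)` to get `δ̂₁` with constants `e_M`; and finally
to `r ↦ e_M r`, whose majorant `γ̂₂` satisfies `e_M ≤ e_M M ≤ γ̂₂(M)` for `M ≥ 1`.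
-/

open MeasureTheory

open Set Filter

noncomputable section

lemma ClassK.monotoneOn {f : ℝ → ℝ} (hf : ClassK f) : MonotoneOn f (Ici 0) :=
  hf.2.1.monotoneOn

lemma ClassK.nonneg_s5 {f : ℝ → ℝ} (hf : ClassK f) {r : ℝ} (hr : 0 ≤ r) : 0 ≤ f r := by
  simpa only [hf.2.2] using hf.monotoneOn self_mem_Ici hr hr

lemma ClassK.comp_mul_left {f : ℝ → ℝ} (hf : ClassK f) {a : ℝ} (ha : 0 < a) :
    ClassK fun r => f (a * r) := by
  have hmaps : MapsTo (a * ·) (Ici 0) (Ici 0) := fun r hr => mul_nonneg ha.le hr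
  refine ⟨hf.1.comp (continuous_const_mul a).continuousOn hmaps, ?_, by simp [hf.2.2]⟩
  exact hf.2.1.comp (fun r _ s _ hrs => mul_lt_mul_of_pos_left hrs ha) hmaps

lemma classK_mul_left {a : ℝ} (ha : 0 < a) : ClassK fun r => a * r :=
  ⟨(continuous_const_mul a).continuousOn, fun _ _ _ _ h => mul_lt_mul_of_pos_left h ha, mul_zero a⟩

lemma ContinuousOn.continuous_comp_max_zero {h : ℝ → ℝ} (hh : ContinuousOn h (Ici 0)) :
    Continuous fun x => h (max x 0) :=
  hh.comp_continuous (continuous_id.max continuous_const) fun x => le_max_right x 0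

lemma ContinuousOn.intervalIntegrable_comp {h : ℝ → ℝ} (hh : ContinuousOn h (Ici 0))
    {φ : ℝ → ℝ} (hφ : Measurable φ) (hφ0 : ∀ s, 0 ≤ φ s) {T C : ℝ} (hT : 0 ≤ T)
    (hC : ∀ s ∈ Icc 0 T, φ s ≤ C) :
    IntervalIntegrable (fun s => h (φ s)) volume 0 T := by
  obtain ⟨B, hB⟩ := isCompact_Icc.exists_bound_of_continuousOn
    (hh.mono Icc_subset_Ici_self : ContinuousOn h (Icc 0 C))
  have hmeas : Measurable fun s => h (φ s) := by
    convert hh.continuous_comp_max_zero.measurable.comp hφ using 2 with s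
    simp [max_eq_left (hφ0 s)]
  rw [intervalIntegrable_iff_integrableOn_Ioc_of_le hT]
  refine Measure.integrableOn_of_bounded measure_Ioc_lt_top.ne hmeas.aestronglyMeasurable
    (M := B) ((ae_restrict_iff' measurableSet_Ioc).2 (ae_of_all _ fun s hs => ?_))
  exact hB _ ⟨hφ0 s, hC s (Ioc_subset_Icc_self hs)⟩

lemma le_max_one_mul_min_one {x a : ℝ} (hx : 0 ≤ x) (hxa : x ≤ a) : x ≤ max 1 a * min x 1 := by
  rcases le_total x 1 with h | h
  · rw [min_eq_left h]; exact le_mul_of_one_le_left hx (le_max_left _ _)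
  · rw [min_eq_right h, mul_one]; exact hxa.trans (le_max_right _ _)

def ramp (M : ℕ) (r : ℝ) : ℝ := min 1 (max (r - M + 1) 0)

lemma ramp_nonneg (M : ℕ) (r : ℝ) : 0 ≤ ramp M r := by
  unfold ramp; positivity

lemma monotone_ramp (M : ℕ) : Monotone (ramp M) := fun _ _ h =>
  min_le_min_left _ (max_le_max_right _ (by linarith))

lemma continuous_ramp (M : ℕ) : Continuous (ramp M) := by
  unfold ramp; fun_prop

lemma ramp_of_le {M : ℕ} {r : ℝ} (h : (M : ℝ) ≤ r) : ramp M r = 1 := by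
  unfold ramp
  rw [max_eq_left (by linarith), min_eq_left (by linarith)]

lemma support_ramp_mul_subset (M : ℕ) (h : ℝ → ℝ) :
    (Function.support fun r => ramp M r * h r) ⊆ Ioi ((M : ℝ) - 1) := by
  refine fun r hr => mem_Ioi.2 (lt_of_not_ge fun hle => hr ?_)
  simp only [ramp, max_eq_right (by linarith : r - M + 1 ≤ 0), min_eq_right zero_le_one, zero_mul]

lemma locallyFinite_Ioi_natCast_sub_one : LocallyFinite fun M : ℕ => Ioi ((M : ℝ) - 1) := by
  intro x
  refine ⟨Iio (x + 1), Iio_mem_nhds (lt_add_one x), (finite_lt_nat (⌈x⌉₊ + 2)).subset ?_⟩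
  rintro M ⟨y, hyM, hyx⟩
  have hceil := Nat.le_ceil x
  have hM : (M : ℝ) < ⌈x⌉₊ + 2 := by linarith [mem_Ioi.1 hyM, mem_Iio.1 hyx]
  exact_mod_cast hM

section Majorant

variable (g : ℕ → ℝ → ℝ)

def majorantLarge (r : ℝ) : ℝ := ∑ᶠ M, ramp M r * g M r

def majorantSmall (r : ℝ) : ℝ := ∑' M, (1 / 2 : ℝ) ^ M * min (g M r) 1

def majorant (r : ℝ) : ℝ := r + majorantLarge g r + majorantSmall g r

variable {g}

lemma locallyFinite_support_ramp_mul :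
    LocallyFinite fun M => Function.support fun r => ramp M r * g M r :=
  locallyFinite_Ioi_natCast_sub_one.subset fun M => support_ramp_mul_subset M (g M)

lemma hasFiniteSupport_ramp_mul (r : ℝ) : Function.HasFiniteSupport fun M => ramp M r * g M r :=
  (locallyFinite_Ioi_natCast_sub_one.point_finite r).subset fun M hM =>
    support_ramp_mul_subset M (g M) hM

lemma norm_majorantSmall_term_le (hnonneg : ∀ M r, 0 ≤ g M r) (M : ℕ) (r : ℝ) :
    ‖(1 / 2 : ℝ) ^ M * min (g M r) 1‖ ≤ (1 / 2) ^ M := by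
  rw [Real.norm_of_nonneg (mul_nonneg (by positivity) (le_min (hnonneg M r) zero_le_one))]
  exact mul_le_of_le_one_right (by positivity) (min_le_right _ _)

lemma summable_majorantSmall_term (hnonneg : ∀ M r, 0 ≤ g M r) (r : ℝ) :
    Summable fun M => (1 / 2 : ℝ) ^ M * min (g M r) 1 :=
  summable_geometric_two.of_norm_bounded (norm_majorantSmall_term_le hnonneg · r)

lemma majorantLarge_nonneg (hnonneg : ∀ M r, 0 ≤ g M r) (r : ℝ) : 0 ≤ majorantLarge g r :=
  finsum_nonneg fun M => mul_nonneg (ramp_nonneg M r) (hnonneg M r)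

lemma majorantSmall_nonneg (hnonneg : ∀ M r, 0 ≤ g M r) (r : ℝ) : 0 ≤ majorantSmall g r :=
  tsum_nonneg fun M => mul_nonneg (by positivity) (le_min (hnonneg M r) zero_le_one)

lemma self_le_majorant (hnonneg : ∀ M r, 0 ≤ g M r) (r : ℝ) : r ≤ majorant g r := by
  have := majorantLarge_nonneg hnonneg r
  have := majorantSmall_nonneg hnonneg r
  unfold majorant; linarith

lemma continuous_majorant (hcont : ∀ M, Continuous (g M)) (hnonneg : ∀ M r, 0 ≤ g M r) :
    Continuous (majorant g) := by
  have hlarge : Continuous (majorantLarge g) :=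
    continuous_finsum (fun M => (continuous_ramp M).mul (hcont M)) locallyFinite_support_ramp_mul
  have hsmall : Continuous (majorantSmall g) :=
    continuous_tsum (fun M => continuous_const.mul ((hcont M).min continuous_const))
      summable_geometric_two (norm_majorantSmall_term_le hnonneg)
  exact (continuous_id.add hlarge).add hsmall

lemma strictMono_majorant (hmono : ∀ M, Monotone (g M)) (hnonneg : ∀ M r, 0 ≤ g M r) :
    StrictMono (majorant g) := by
  intro a b hab
  have hlarge : majorantLarge g a ≤ majorantLarge g b :=
    finsum_le_finsum' (hasFiniteSupport_ramp_mul a) (hasFiniteSupport_ramp_mul b) fun M =>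
      mul_le_mul (monotone_ramp M hab.le) (hmono M hab.le) (hnonneg M a) (ramp_nonneg M b)
  have hsmall : majorantSmall g a ≤ majorantSmall g b :=
    Summable.tsum_le_tsum (fun M => by gcongr; exact hmono M hab.le)
      (summable_majorantSmall_term hnonneg a) (summable_majorantSmall_term hnonneg b)
  unfold majorant; linarith

lemma majorant_zero (hzero : ∀ M, g M 0 = 0) : majorant g 0 = 0 := by
  simp [majorant, majorantLarge, majorantSmall, hzero]

lemma classKInf_majorant (hcont : ∀ M, Continuous (g M)) (hmono : ∀ M, Monotone (g M))
    (hnonneg : ∀ M r, 0 ≤ g M r) (hzero : ∀ M, g M 0 = 0) : ClassKInf (majorant g) :=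
  ⟨⟨(continuous_majorant hcont hnonneg).continuousOn,
      (strictMono_majorant hmono hnonneg).strictMonoOn _, majorant_zero hzero⟩,
    tendsto_atTop_mono (self_le_majorant hnonneg) tendsto_id⟩

lemma le_majorant_of_natCast_le (hnonneg : ∀ M r, 0 ≤ g M r) {M : ℕ} {r : ℝ}
    (h : (M : ℝ) ≤ r) : g M r ≤ majorant g r := by
  have hlarge : g M r ≤ majorantLarge g r := by
    simpa only [majorantLarge, ramp_of_le h, one_mul] using
      single_le_finsum M (hasFiniteSupport_ramp_mul r) fun N =>
        mul_nonneg (ramp_nonneg N r) (hnonneg N r)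
  have := majorantSmall_nonneg hnonneg r
  have := (Nat.cast_nonneg M).trans h
  unfold majorant; linarith

lemma le_mul_majorant (hmono : ∀ M, Monotone (g M)) (hnonneg : ∀ M r, 0 ≤ g M r)
    (M : ℕ) {r : ℝ} (hr : 0 ≤ r) : g M r ≤ 2 ^ M * max 1 (g M M) * majorant g r := by
  rcases le_or_gt (M : ℝ) r with h | h
  · have hc : 1 ≤ 2 ^ M * max 1 (g M M) :=
      one_le_mul_of_one_le_of_one_le (one_le_pow₀ one_le_two) (le_max_left _ _)
    calc g M r ≤ majorant g r := le_majorant_of_natCast_le hnonneg h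
      _ ≤ 2 ^ M * max 1 (g M M) * majorant g r :=
          le_mul_of_one_le_left (hr.trans (self_le_majorant hnonneg r)) hc
  · have hterm : (1 / 2 : ℝ) ^ M * min (g M r) 1 ≤ majorant g r := by
      have := (summable_majorantSmall_term hnonneg r).le_tsum M fun N _ =>
        mul_nonneg (by positivity) (le_min (hnonneg N r) zero_le_one)
      have := majorantLarge_nonneg hnonneg r
      unfold majorant majorantSmall at *; linarith
    calc g M r ≤ max 1 (g M M) * min (g M r) 1 :=
          le_max_one_mul_min_one (hnonneg M r) (hmono M h.le)
      _ = 2 ^ M * max 1 (g M M) * ((1 / 2) ^ M * min (g M r) 1) := by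
          rw [one_div_pow]; field_simp
      _ ≤ 2 ^ M * max 1 (g M M) * majorant g r := by gcongr

end Majorant

theorem exists_classKInf_majorant (f : ℕ → ℝ → ℝ) (hcont : ∀ M, ContinuousOn (f M) (Ici 0))
    (hmono : ∀ M, MonotoneOn (f M) (Ici 0)) (hzero : ∀ M, f M 0 = 0) :
    ∃ Φ : ℝ → ℝ, ClassKInf Φ ∧ (∀ (M : ℕ) (r : ℝ), (M : ℝ) ≤ r → f M r ≤ Φ r) ∧
      ∃ c : ℕ → ℝ, (∀ M, 0 < c M) ∧ ∀ M r, 0 ≤ r → f M r ≤ c M * Φ r := by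
  set g : ℕ → ℝ → ℝ := fun M r => f M (max r 0)
  have hfg : ∀ M r, 0 ≤ r → f M r = g M r := fun M r hr => by simp [g, max_eq_left hr]
  have hgcont : ∀ M, Continuous (g M) := fun M => (hcont M).continuous_comp_max_zero
  have hgmono : ∀ M, Monotone (g M) := fun M a b hab =>
    hmono M (le_max_right a 0) (le_max_right b 0) (max_le_max_right 0 hab)
  have hgnonneg : ∀ M r, 0 ≤ g M r := fun M r => by
    simpa [hzero] using hmono M self_mem_Ici (le_max_right r 0) (le_max_right r 0)
  have hgzero : ∀ M, g M 0 = 0 := fun M => by simp [g, hzero]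
  refine ⟨majorant g, classKInf_majorant hgcont hgmono hgnonneg hgzero, fun M r h => ?_,
    fun M => 2 ^ M * max 1 (g M M), fun M => by positivity, fun M r hr => ?_⟩
  · rw [hfg M r ((Nat.cast_nonneg M).trans h)]
    exact le_majorant_of_natCast_le hgnonneg h
  · rw [hfg M r hr]
    exact le_mul_majorant hgmono hgnonneg M hr

end

/-- Given two countable families of class-K∞ functions, there are class-K∞ functions
γ̂₂, δ̂₁, δ₂ such that for all T > 0, integers M ≥ 1, and nonnegative bounded measurable φ:
γ_M(∫₀^T σ_M(φ(s)) ds) ≤ γ̂₂(M)·δ̂₁(∫₀^T δ₂(φ(s)) ds). -/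
theorem stmt5 (γ σ : ℕ → ℝ → ℝ)
    (hγ : ∀ M : ℕ, ClassKInf (γ M)) (hσ : ∀ M : ℕ, ClassKInf (σ M)) :
    ∃ γhat₂ δhat₁ δ₂ : ℝ → ℝ, ClassKInf γhat₂ ∧ ClassKInf δhat₁ ∧ ClassKInf δ₂ ∧
      ∀ T : ℝ, 0 < T → ∀ M : ℕ, 1 ≤ M → ∀ φ : ℝ → ℝ,
        Measurable φ → (∀ s, 0 ≤ φ s) → (∃ C : ℝ, ∀ s ∈ Set.Icc 0 T, φ s ≤ C) →
        γ M (∫ s in (0:ℝ)..T, σ M (φ s)) ≤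
          γhat₂ (M : ℝ) * δhat₁ (∫ s in (0:ℝ)..T, δ₂ (φ s)) := by
  obtain ⟨δ₂, hδ₂, -, c, hc, hσδ₂⟩ := exists_classKInf_majorant σ (fun M => (hσ M).1.1)
    (fun M => (hσ M).1.monotoneOn) (fun M => (hσ M).1.2.2)
  have hγc : ∀ M, ClassK fun r => γ M (c M * r) := fun M => (hγ M).1.comp_mul_left (hc M)
  obtain ⟨δhat₁, hδhat₁, -, e, he, hγδhat₁⟩ := exists_classKInf_majorant _ (fun M => (hγc M).1)
    (fun M => (hγc M).monotoneOn) (fun M => (hγc M).2.2)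
  have hlin : ∀ M, ClassK fun r => e M * r := fun M => classK_mul_left (he M)
  obtain ⟨γhat₂, hγhat₂, he_le, -⟩ := exists_classKInf_majorant _ (fun M => (hlin M).1)
    (fun M => (hlin M).monotoneOn) (fun M => (hlin M).2.2)
  refine ⟨γhat₂, δhat₁, δ₂, hγhat₂, hδhat₁, hδ₂, ?_⟩
  rintro T hT M hM φ hφ hφ0 ⟨C, hC⟩
  set J := ∫ s in (0:ℝ)..T, δ₂ (φ s)
  have hI : 0 ≤ ∫ s in (0:ℝ)..T, σ M (φ s) :=
    intervalIntegral.integral_nonneg hT.le fun s _ => (hσ M).1.nonneg_s5 (hφ0 s)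
  have hJ : 0 ≤ J := intervalIntegral.integral_nonneg hT.le fun s _ => hδ₂.1.nonneg_s5 (hφ0 s)
  have hσJ : ∫ s in (0:ℝ)..T, σ M (φ s) ≤ c M * J := by
    rw [← intervalIntegral.integral_const_mul]
    exact intervalIntegral.integral_mono_on hT.le
      ((hσ M).1.1.intervalIntegrable_comp hφ hφ0 hT.le hC)
      ((hδ₂.1.1.intervalIntegrable_comp hφ hφ0 hT.le hC).const_mul _)
      fun s _ => hσδ₂ M _ (hφ0 s)
  have heγhat₂ : e M ≤ γhat₂ M :=
    (le_mul_of_one_le_right (he M).le (by exact_mod_cast hM)).trans (he_le M M le_rfl)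
  calc γ M (∫ s in (0:ℝ)..T, σ M (φ s)) ≤ γ M (c M * J) :=
        (hγ M).1.monotoneOn hI (mul_nonneg (hc M).le hJ) hσJ
    _ ≤ e M * δhat₁ J := hγδhat₁ M J hJ
    _ ≤ γhat₂ M * δhat₁ J := mul_le_mul_of_nonneg_right heγhat₂ (hδhat₁.1.nonneg_s5 hJ)
end
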